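/- Let 𝒢 = (P, 𝓛) be a connected partial euclidean geometry in which every point lies on at least 2 lines and every line of the Levi graph has degree ≥ 2. Then the flats of the Levi graph of 𝒢 are exactly: the full vertex set P ∪ 𝓛, the empty set, all singletons {x} for x ∈ P ∪ 𝓛, all lines L ∈ 𝓛 (as subsets of P), and all pencils 𝓛(p) = {L ∈ 𝓛 : p ∈ L} for p ∈ P. Consequently the lattice of flats of the Levi graph satisfies the Jordan–Dedekind condition: all maximal chains have length 3. -/

import Mathlib

/-
In the Levi graph of a partial linear space two distinct vertices have at most one common
neighbour. Hence the star of a set with two distinct elements is empty or a singleton, while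
the stars of `∅` and of a single vertex are the whole vertex set and a neighbourhood, i.e. a
line or a pencil; a point together with a line has empty star. Minimum degree two makes
every singleton the star of a pair and makes distinct neighbourhoods incomparable, so every
maximal chain of flats is `∅ ⊂ {x} ⊂ N(v) ⊂ V` with `x ∈ N(v)`.
-/

/-- `St(W)`: the set of vertices adjacent to every vertex of `W` (so `St(∅) = V`). -/
def starW {V : Type*} (G : SimpleGraph V) (W : Set V) : Set V := {v | ∀ w ∈ W, G.Adj v w}

/-- The flats of `G`: all sets of the form `St(W)`, `W ⊆ V`. -/
def flats {V : Type*} (G : SimpleGraph V) : Set (Set V) := {X | ∃ W : Set V, X = starW G W}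

/-- The Levi graph of a point–line incidence structure: vertices are points and lines,
with an edge `p — L` exactly when `p ∈ L`. -/
def levi {α : Type*} (L : Set (Set α)) : SimpleGraph (α ⊕ ↥L) where
  Adj x y :=
    match x, y with
    | Sum.inl p, Sum.inr l => p ∈ l.1
    | Sum.inr l, Sum.inl p => p ∈ l.1
    | _, _ => False
  symm := ⟨by rintro (p | l) (q | m) h <;> simp_all⟩
  loopless := ⟨by rintro (p | l) h <;> simp_all⟩

namespace SimpleGraph

variable {V : Type*}

/-- Equivalently, `G` contains no cycle of length 4. -/
def C4Free (G : SimpleGraph V) : Prop :=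
  ∀ ⦃a b : V⦄, a ≠ b → (G.neighborSet a ∩ G.neighborSet b).Subsingleton

end SimpleGraph

open SimpleGraph Set

section Flats

variable {V : Type*} {G : SimpleGraph V}

lemma starW_empty : starW G ∅ = univ := by
  ext v; simp [starW]

lemma starW_singleton (v : V) : starW G {v} = G.neighborSet v := by
  ext w; simp [starW, G.adj_comm]

lemma starW_pair (a b : V) : starW G {a, b} = G.neighborSet a ∩ G.neighborSet b := by
  ext w; simp [starW, G.adj_comm]

lemma starW_anti {W W' : Set V} (h : W ⊆ W') : starW G W' ⊆ starW G W :=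
  fun _ hv w hw => hv w (h hw)

lemma univ_mem_flats : (univ : Set V) ∈ flats G :=
  ⟨∅, starW_empty.symm⟩

lemma neighborSet_mem_flats (v : V) : G.neighborSet v ∈ flats G :=
  ⟨{v}, (starW_singleton v).symm⟩

lemma empty_mem_flats_of_disjoint {a b : V} (h : Disjoint (G.neighborSet a) (G.neighborSet b)) :
    (∅ : Set V) ∈ flats G :=
  ⟨{a, b}, by rw [starW_pair, h.inter_eq]⟩

lemma singleton_mem_flats (hG : G.C4Free) {v : V} (hv : (G.neighborSet v).Nontrivial) :
    {v} ∈ flats G := by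
  obtain ⟨a, ha, b, hb, hab⟩ := hv
  refine ⟨{a, b}, ?_⟩
  rw [starW_pair]
  exact ((hG hab).eq_singleton_of_mem ⟨G.adj_symm ha, G.adj_symm hb⟩).symm

lemma eq_of_mem_flats (hG : G.C4Free) {X : Set V} (hX : X ∈ flats G) :
    X = univ ∨ X = ∅ ∨ (∃ v, X = {v}) ∨ ∃ v, X = G.neighborSet v := by
  obtain ⟨W, rfl⟩ := hX
  rcases W.subsingleton_or_nontrivial with hW | ⟨a, ha, b, hb, hab⟩
  · rcases hW.eq_empty_or_singleton with rfl | ⟨v, rfl⟩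
    · exact Or.inl starW_empty
    · exact Or.inr (Or.inr (Or.inr ⟨v, starW_singleton v⟩))
  · have hsub : starW G W ⊆ G.neighborSet a ∩ G.neighborSet b :=
      starW_pair a b ▸ starW_anti (pair_subset ha hb)
    rcases ((hG hab).anti hsub).eq_empty_or_singleton with h | h
    · exact Or.inr (Or.inl h)
    · exact Or.inr (Or.inr (Or.inl h))

theorem flats_eq_of_c4Free (hG : G.C4Free) (hdeg : ∀ v, (G.neighborSet v).Nontrivial)
    (hempty : (∅ : Set V) ∈ flats G) :
    flats G = {univ, ∅} ∪ {S | ∃ v, S = {v}} ∪ {S | ∃ v, S = G.neighborSet v} := by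
  ext X
  constructor
  · intro hX
    rcases eq_of_mem_flats hG hX with rfl | rfl | h | h <;> simp_all
  · rintro (((rfl | rfl) | ⟨v, rfl⟩) | ⟨v, rfl⟩)
    exacts [univ_mem_flats, hempty, singleton_mem_flats hG (hdeg v), neighborSet_mem_flats v]

end Flats

section Chains

variable {V : Type*} {G : SimpleGraph V} {C : Set (Set V)}

lemma mem_of_maximal_isChain {β : Type*} {r : β → β → Prop} {F C : Set β}
    (hC : Maximal (fun C => C ⊆ F ∧ IsChain r C) C) {x : β} (hx : x ∈ F)
    (hcomp : ∀ y ∈ C, r x y ∨ r y x) : x ∈ C :=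
  hC.2 ⟨insert_subset hx hC.1.1, hC.1.2.insert fun y hy _ => hcomp y hy⟩ (subset_insert x C)
    (mem_insert x C)

lemma eq_of_singleton_mem_isChain (hC : IsChain (· ⊆ ·) C) {x y : V} (hx : {x} ∈ C)
    (hy : {y} ∈ C) : x = y := by
  rcases hC.total hx hy with h | h
  · exact singleton_subset_singleton.1 h
  · exact (singleton_subset_singleton.1 h).symm

lemma eq_of_neighborSet_subset (hG : G.C4Free) (hdeg : ∀ v, (G.neighborSet v).Nontrivial)
    {u v : V} (h : G.neighborSet u ⊆ G.neighborSet v) : u = v := by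
  by_contra huv
  exact (hdeg u).not_subsingleton ((hG huv).anti (subset_inter subset_rfl h))

lemma neighborSet_eq_of_mem_isChain (hG : G.C4Free) (hdeg : ∀ v, (G.neighborSet v).Nontrivial)
    (hC : IsChain (· ⊆ ·) C) {u v : V} (hu : G.neighborSet u ∈ C) (hv : G.neighborSet v ∈ C) :
    u = v := by
  rcases hC.total hu hv with h | h
  · exact eq_of_neighborSet_subset hG hdeg h
  · exact (eq_of_neighborSet_subset hG hdeg h).symm

lemma exists_singleton_mem_or_neighborSet_mem [Nonempty V] (hG : G.C4Free)
    (hdeg : ∀ v, (G.neighborSet v).Nontrivial)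
    (hC : Maximal (fun C => C ⊆ flats G ∧ IsChain (· ⊆ ·) C) C) :
    (∃ x, {x} ∈ C) ∨ ∃ v, G.neighborSet v ∈ C := by
  by_contra! ⟨hsing, hnbhd⟩
  obtain ⟨v⟩ := ‹Nonempty V›
  refine hsing v (mem_of_maximal_isChain hC (singleton_mem_flats hG (hdeg v)) fun S hS => ?_)
  rcases eq_of_mem_flats hG (hC.1.1 hS) with rfl | rfl | ⟨y, rfl⟩ | ⟨w, rfl⟩
  · exact Or.inl (subset_univ _)
  · exact Or.inr (empty_subset _)
  · exact absurd hS (hsing y)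
  · exact absurd hS (hnbhd w)

lemma exists_neighborSet_mem_of_singleton_mem (hG : G.C4Free)
    (hdeg : ∀ v, (G.neighborSet v).Nontrivial)
    (hC : Maximal (fun C => C ⊆ flats G ∧ IsChain (· ⊆ ·) C) C) {x : V} (hx : {x} ∈ C) :
    ∃ v, x ∈ G.neighborSet v ∧ G.neighborSet v ∈ C := by
  by_contra! hno
  have hnbhd : ∀ v, G.neighborSet v ∉ C := fun v hv => by
    refine hno v ?_ hv
    rcases hC.1.2.total hx hv with h | h
    · exact singleton_subset_iff.1 h
    · exact absurd h (hdeg v).not_subset_singleton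
  obtain ⟨a, ha, -⟩ := hdeg x
  refine hnbhd a (mem_of_maximal_isChain hC (neighborSet_mem_flats a) fun S hS => ?_)
  rcases eq_of_mem_flats hG (hC.1.1 hS) with rfl | rfl | ⟨y, rfl⟩ | ⟨w, rfl⟩
  · exact Or.inl (subset_univ _)
  · exact Or.inr (empty_subset _)
  · rw [eq_of_singleton_mem_isChain hC.1.2 hS hx]
    exact Or.inr (singleton_subset_iff.2 (G.adj_symm ha))
  · exact absurd hS (hnbhd w)

lemma exists_singleton_mem_of_neighborSet_mem (hG : G.C4Free)
    (hdeg : ∀ v, (G.neighborSet v).Nontrivial)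
    (hC : Maximal (fun C => C ⊆ flats G ∧ IsChain (· ⊆ ·) C) C) {v : V}
    (hv : G.neighborSet v ∈ C) : ∃ x ∈ G.neighborSet v, {x} ∈ C := by
  by_contra! hno
  have hsing : ∀ x, {x} ∉ C := fun x hx => by
    refine hno x ?_ hx
    rcases hC.1.2.total hx hv with h | h
    · exact singleton_subset_iff.1 h
    · exact absurd h (hdeg v).not_subset_singleton
  obtain ⟨a, ha, -⟩ := hdeg v
  refine hsing a (mem_of_maximal_isChain hC (singleton_mem_flats hG (hdeg a)) fun S hS => ?_)
  rcases eq_of_mem_flats hG (hC.1.1 hS) with rfl | rfl | ⟨y, rfl⟩ | ⟨w, rfl⟩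
  · exact Or.inl (subset_univ _)
  · exact Or.inr (empty_subset _)
  · exact absurd hS (hsing y)
  · rw [neighborSet_eq_of_mem_isChain hG hdeg hC.1.2 hS hv]
    exact Or.inl (singleton_subset_iff.2 ha)

lemma eq_of_maximal_isChain [Nonempty V] (hG : G.C4Free)
    (hdeg : ∀ v, (G.neighborSet v).Nontrivial) (hempty : (∅ : Set V) ∈ flats G)
    (hC : Maximal (fun C => C ⊆ flats G ∧ IsChain (· ⊆ ·) C) C) :
    ∃ x v, x ∈ G.neighborSet v ∧ C = {∅, {x}, G.neighborSet v, univ} := by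
  obtain ⟨x, v, hxv, hx, hv⟩ : ∃ x v, x ∈ G.neighborSet v ∧ {x} ∈ C ∧ G.neighborSet v ∈ C := by
    rcases exists_singleton_mem_or_neighborSet_mem hG hdeg hC with ⟨x, hx⟩ | ⟨v, hv⟩
    · obtain ⟨v, hxv, hv⟩ := exists_neighborSet_mem_of_singleton_mem hG hdeg hC hx
      exact ⟨x, v, hxv, hx, hv⟩
    · obtain ⟨x, hxv, hx⟩ := exists_singleton_mem_of_neighborSet_mem hG hdeg hC hv
      exact ⟨x, v, hxv, hx, hv⟩
  refine ⟨x, v, hxv, Subset.antisymm (fun S hS => ?_) ?_⟩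
  · rcases eq_of_mem_flats hG (hC.1.1 hS) with rfl | rfl | ⟨y, rfl⟩ | ⟨w, rfl⟩
    · simp
    · simp
    · simp [eq_of_singleton_mem_isChain hC.1.2 hS hx]
    · simp [neighborSet_eq_of_mem_isChain hG hdeg hC.1.2 hS hv]
  · have h0 : ∅ ∈ C := mem_of_maximal_isChain hC hempty fun S _ => Or.inl (empty_subset S)
    have h1 : univ ∈ C := mem_of_maximal_isChain hC univ_mem_flats fun S _ => Or.inr (subset_univ S)
    simp [insert_subset_iff, h0, h1, hx, hv]

lemma ncard_chain_eq_four {S : Set V} (hS : S.Nontrivial) (hSV : S ≠ univ) (x : V) :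
    ({∅, {x}, S, univ} : Set (Set V)).ncard = 4 := by
  have : Nonempty V := ⟨x⟩
  exact ncard_eq_four.2 ⟨_, _, _, _, (singleton_nonempty x).ne_empty.symm,
    hS.nonempty.ne_empty.symm, empty_ne_univ, hS.ne_singleton.symm,
    (hS.mono (subset_univ _)).ne_singleton.symm, hSV, rfl⟩

theorem ncard_eq_four_of_maximal_isChain [Nonempty V] (hG : G.C4Free)
    (hdeg : ∀ v, (G.neighborSet v).Nontrivial) (hempty : (∅ : Set V) ∈ flats G)
    (hC : Maximal (fun C => C ⊆ flats G ∧ IsChain (· ⊆ ·) C) C) : C.ncard = 4 := by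
  obtain ⟨x, v, -, rfl⟩ := eq_of_maximal_isChain hG hdeg hempty hC
  exact ncard_chain_eq_four (hdeg v) (G.neighborSet_ne_univ v) x

end Chains

section Levi

variable {α : Type*} {L : Set (Set α)}

lemma levi_neighborSet_inl (p : α) :
    (levi L).neighborSet (Sum.inl p) = {x | ∃ l : ↥L, x = Sum.inr l ∧ p ∈ l.1} := by
  ext (q | l) <;> simp [levi]

lemma levi_neighborSet_inr (l : ↥L) : (levi L).neighborSet (Sum.inr l) = Sum.inl '' l.1 := by
  ext (q | m) <;> simp [levi]

lemma levi_c4Free (hinter : ∀ l ∈ L, ∀ l' ∈ L, l ≠ l' → (l ∩ l' : Set α).Subsingleton) :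
    (levi L).C4Free := by
  rintro (p | l) (q | m) hab (x | x) ⟨hx, hx'⟩ (y | y) ⟨hy, hy'⟩ <;>
    simp only [levi, mem_neighborSet, ne_eq, Sum.inl.injEq, Sum.inr.injEq] at *
  · by_contra hxy
    exact hab (hinter _ x.2 _ y.2 (Subtype.val_injective.ne hxy) ⟨hx, hy⟩ ⟨hx', hy'⟩)
  · exact hinter _ l.2 _ m.2 (Subtype.val_injective.ne hab) ⟨hx, hx'⟩ ⟨hy, hy'⟩

lemma levi_neighborSet_nontrivial (hlines : ∀ l ∈ L, ∃ p ∈ l, ∃ q ∈ l, p ≠ q)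
    (hpoints : ∀ p : α, ∃ l ∈ L, ∃ l' ∈ L, l ≠ l' ∧ p ∈ l ∧ p ∈ l') :
    ∀ v : α ⊕ ↥L, ((levi L).neighborSet v).Nontrivial
  | Sum.inl p => by
    obtain ⟨l, hl, l', hl', hne, hpl, hpl'⟩ := hpoints p
    rw [levi_neighborSet_inl]
    exact ⟨_, ⟨⟨l, hl⟩, rfl, hpl⟩, _, ⟨⟨l', hl'⟩, rfl, hpl'⟩, by simpa using hne⟩
  | Sum.inr l => by
    obtain ⟨p, hp, q, hq, hpq⟩ := hlines l.1 l.2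
    rw [levi_neighborSet_inr]
    exact ⟨_, ⟨p, hp, rfl⟩, _, ⟨q, hq, rfl⟩, by simpa using hpq⟩

lemma empty_mem_flats_levi (p : α) (l : ↥L) : (∅ : Set (α ⊕ ↥L)) ∈ flats (levi L) := by
  refine empty_mem_flats_of_disjoint (a := Sum.inl p) (b := Sum.inr l) ?_
  rw [levi_neighborSet_inl, levi_neighborSet_inr, Set.disjoint_left]
  rintro _ ⟨m, rfl, -⟩ ⟨q, -, h⟩
  exact Sum.inl_ne_inr h

lemma setOf_eq_levi_neighborSet :
    {S | ∃ v, S = (levi L).neighborSet v} =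
      {S | ∃ l : ↥L, S = Sum.inl '' l.1} ∪
        {S | ∃ p : α, S = {x | ∃ l : ↥L, x = Sum.inr l ∧ p ∈ l.1}} := by
  ext S
  simp only [mem_ofPred_eq, mem_union, Sum.exists, levi_neighborSet_inl, levi_neighborSet_inr]
  exact or_comm

end Levi

theorem flats_levi_and_jordan_dedekind_general {α : Type*} [Nonempty α]
    (L : Set (Set α)) (hL : L.Nonempty)
    (hG2 : ∀ l ∈ L, ∀ l' ∈ L, l ≠ l' → (l ∩ l' : Set α).Subsingleton)
    (hG3 : ∀ l ∈ L, ∃ p ∈ l, ∃ q ∈ l, p ≠ q)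
    (hdeg : ∀ p : α, ∃ l ∈ L, ∃ l' ∈ L, l ≠ l' ∧ p ∈ l ∧ p ∈ l') :
    flats (levi L) =
      {Set.univ, ∅} ∪ {S | ∃ x : α ⊕ ↥L, S = {x}} ∪
        {S | ∃ l : ↥L, S = Sum.inl '' l.1} ∪
        {S | ∃ p : α, S = {x | ∃ l : ↥L, x = Sum.inr l ∧ p ∈ l.1}} ∧
    ∀ C : Set (Set (α ⊕ ↥L)), C ⊆ flats (levi L) → IsChain (· ⊆ ·) C →
      (∀ C', C ⊆ C' → C' ⊆ flats (levi L) → IsChain (· ⊆ ·) C' → C' = C) →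
      C.ncard = 4 := by
  have hG := levi_c4Free hG2
  have hnbhd := levi_neighborSet_nontrivial hG3 hdeg
  have hempty := empty_mem_flats_levi (Classical.arbitrary α) ⟨hL.some, hL.some_mem⟩
  refine ⟨?_, fun C hCF hC hmax => ?_⟩
  · rw [flats_eq_of_c4Free hG hnbhd hempty, setOf_eq_levi_neighborSet, ← union_assoc]
  · exact ncard_eq_four_of_maximal_isChain hG hnbhd hempty
      ⟨⟨hCF, hC⟩, fun C' hC' hle => (hmax C' hle hC'.1 hC'.2).le⟩

/-- For a connected partial euclidean geometry in which every point lies on at least two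
lines and every line has at least two points, the flats of the Levi graph are exactly: the
full vertex set, the empty set, the singletons, the lines (as sets of points), and the
pencils of lines through a point. Consequently the lattice of flats of the Levi graph
satisfies the Jordan–Dedekind condition: every maximal chain of flats has length 3
(four elements). -/
theorem flats_levi_and_jordan_dedekind {α : Type*} [Fintype α] [Nonempty α]
    (L : Set (Set α)) (hL : L.Nonempty)
    (hG1 : ∀ p : α, ∃ l ∈ L, p ∈ l)
    (hG2 : ∀ l ∈ L, ∀ l' ∈ L, l ≠ l' → (l ∩ l' : Set α).Subsingleton)
    (hG3 : ∀ l ∈ L, ∃ p ∈ l, ∃ q ∈ l, p ≠ q)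
    (hconn : ∀ L₁ L₂ : Set (Set α), L₁ ∪ L₂ = L → Disjoint L₁ L₂ →
      L₁.Nonempty → L₂.Nonempty → ((⋃₀ L₁) ∩ (⋃₀ L₂)).Nonempty)
    (hdeg : ∀ p : α, ∃ l ∈ L, ∃ l' ∈ L, l ≠ l' ∧ p ∈ l ∧ p ∈ l') :
    flats (levi L) =
      {Set.univ, ∅} ∪ {S | ∃ x : α ⊕ ↥L, S = {x}} ∪
        {S | ∃ l : ↥L, S = Sum.inl '' l.1} ∪
        {S | ∃ p : α, S = {x | ∃ l : ↥L, x = Sum.inr l ∧ p ∈ l.1}} ∧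
    ∀ C : Set (Set (α ⊕ ↥L)), C ⊆ flats (levi L) → IsChain (· ⊆ ·) C →
      (∀ C', C ⊆ C' → C' ⊆ flats (levi L) → IsChain (· ⊆ ·) C' → C' = C) →
      C.ncard = 4 :=
  flats_levi_and_jordan_dedekind_general L hL hG2 hG3 hdeg
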